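/- arXiv:1507.04425 — 2 statements merged into one kernel-verified Lean document; each statement's English description precedes it below -/
import Mathlib

section
/- For every complex number q with |q| < 1, the function 𝒫 satisfies the differential equation q·𝒫′(q) = (𝒫(q)² − 𝒬(q))/4, where ′ denotes the complex derivative with respect to q. -/
/-!
Write `G k = q^k / (1 - q^k)` and `c n = (-1)^(n-1) n`, so that `𝒫 = 1 + 8 ∑ c n G n`,
`𝒬 = 1 - 16 ∑ c n n² G n` and `q 𝒫' = 8 ∑ c n n (G n + G n ²)`. The differential equation then
reduces to the identity `4 (∑ c n G n)² = 2 ∑ c n n G n² - ∑ c n (n - 1)² G n`.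

Every product of two Lambert terms satisfies `G a G b = G (a + b) (1 + G a + G b)`. Applied to a
symmetric weight `u` with `u a b - u (a + b) a = 4 c (a + b) c a`, this turns the off-diagonal
part of the square into `-∑ u a b G (a + b)` plus diagonal terms, and the inner sums
`∑_{a + b = N} u a b = c N (N - 1)²` are computed in closed form.
-/

open Complex

/-- The normalized Eisenstein series `𝒫(q) = 1 + 8 ∑_{n≥1} (-1)^{n-1} n qⁿ/(1-qⁿ)`. -/
noncomputable def mP (q : ℂ) : ℂ :=
  1 + 8 * ∑' n : ℕ, (-1) ^ n * ((n : ℂ) + 1) * q ^ (n + 1) / (1 - q ^ (n + 1))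

/-- The normalized Eisenstein series `e(q) = 1 + 24 ∑_{n≥1} n qⁿ/(1+qⁿ)`. -/
noncomputable def ee (q : ℂ) : ℂ :=
  1 + 24 * ∑' n : ℕ, ((n : ℂ) + 1) * q ^ (n + 1) / (1 + q ^ (n + 1))

/-- The normalized Eisenstein series `𝒬(q) = 1 - 16 ∑_{n≥1} (-1)^{n-1} n³ qⁿ/(1-qⁿ)`. -/
noncomputable def mQ (q : ℂ) : ℂ :=
  1 - 16 * ∑' n : ℕ, (-1) ^ n * ((n : ℂ) + 1) ^ 3 * q ^ (n + 1) / (1 - q ^ (n + 1))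

noncomputable def lambertTerm (q : ℂ) (k : ℕ) : ℂ := q ^ k / (1 - q ^ k)

section LambertTerm

variable {q : ℂ}

lemma one_sub_pow_ne_zero (hq : ‖q‖ < 1) {k : ℕ} (hk : k ≠ 0) : 1 - q ^ k ≠ 0 := by
  refine sub_ne_zero.2 fun h => ?_
  have := pow_lt_one₀ (norm_nonneg q) hq hk
  rw [← norm_pow, ← h, norm_one] at this
  exact this.false

lemma norm_lambertTerm_le (hq : ‖q‖ < 1) {k : ℕ} (hk : k ≠ 0) :
    ‖lambertTerm q k‖ ≤ ‖q‖ ^ k / (1 - ‖q‖) := by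
  rw [lambertTerm, norm_div, norm_pow]
  gcongr
  calc 1 - ‖q‖ ≤ ‖(1 : ℂ)‖ - ‖q ^ k‖ := by
        rw [norm_one, norm_pow]; linarith [pow_le_of_le_one (norm_nonneg q) hq.le hk]
    _ ≤ ‖1 - q ^ k‖ := norm_sub_norm_le _ _

lemma lambertTerm_mul_lambertTerm (hq : ‖q‖ < 1) {a b : ℕ} (ha : a ≠ 0) (hb : b ≠ 0) :
    lambertTerm q a * lambertTerm q b =
      lambertTerm q (a + b) * (1 + lambertTerm q a + lambertTerm q b) := by
  have := one_sub_pow_ne_zero hq ha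
  have := one_sub_pow_ne_zero hq hb
  have := one_sub_pow_ne_zero hq (add_ne_zero.2 (Or.inl ha) : a + b ≠ 0)
  simp only [lambertTerm, pow_add] at *
  field_simp
  ring

lemma hasDerivAt_lambertTerm (hq : ‖q‖ < 1) (k : ℕ) :
    HasDerivAt (lambertTerm · (k + 1)) ((k + 1) * q ^ k / (1 - q ^ (k + 1)) ^ 2) q := by
  have hne := one_sub_pow_ne_zero hq k.succ_ne_zero
  refine ((hasDerivAt_pow (k + 1) q).fun_div ((hasDerivAt_pow (k + 1) q).const_sub 1)
    hne).congr_deriv ?_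
  rw [Nat.add_sub_cancel]
  push_cast
  ring

lemma mul_deriv_lambertTerm (hq : ‖q‖ < 1) (k : ℕ) :
    q * deriv (lambertTerm · (k + 1)) q =
      (k + 1) * (lambertTerm q (k + 1) + lambertTerm q (k + 1) ^ 2) := by
  have hne := one_sub_pow_ne_zero hq k.succ_ne_zero
  rw [(hasDerivAt_lambertTerm hq k).deriv, lambertTerm]
  field_simp
  ring

end LambertTerm

lemma norm_natCast_add_one (n : ℕ) : ‖(n : ℂ) + 1‖ = n + 1 := by
  exact_mod_cast Complex.norm_natCast (n + 1)

lemma neg_one_pow_sq (n : ℕ) : ((-1 : ℂ) ^ n) ^ 2 = 1 := by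
  rw [← pow_mul, pow_mul', neg_one_sq, one_pow]

section Weights

open Finset

def alternatingNat (n : ℕ) : ℂ := (-1) ^ (n + 1) * n

lemma norm_alternatingNat (n : ℕ) : ‖alternatingNat n‖ = n := by simp [alternatingNat]

/-- The weight `u` of the proof sketch. -/
def pairWeight (a b : ℕ) : ℂ :=
  alternatingNat a * a + alternatingNat b * b + alternatingNat (a + b) * ↑(a + b)

lemma pairWeight_comm (a b : ℕ) : pairWeight a b = pairWeight b a := by
  simp only [pairWeight, add_comm a b]; ring

lemma pairWeight_sub_pairWeight_add (a b : ℕ) :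
    pairWeight a b - pairWeight (a + b) a = 4 * alternatingNat (a + b) * alternatingNat a := by
  simp only [pairWeight, alternatingNat]
  push_cast
  linear_combination (-1 : ℂ) ^ b * (b : ℂ) ^ 2 * neg_one_pow_sq a

lemma pairWeight_self_add (a : ℕ) :
    pairWeight a a + 4 * alternatingNat a ^ 2 = 2 * alternatingNat a * a := by
  simp only [pairWeight, alternatingNat]
  push_cast
  ring

lemma two_mul_sum_range_alternatingNat_mul_self (n : ℕ) :
    2 * ∑ i ∈ range n, alternatingNat (i + 1) * ↑(i + 1) = alternatingNat n * (n + 1) := by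
  induction n with
  | zero => simp [alternatingNat]
  | succ n ih =>
    rw [sum_range_succ, mul_add, ih]
    simp only [alternatingNat]
    push_cast
    ring

lemma sum_antidiagonal_pairWeight (s : ℕ) :
    ∑ ij ∈ antidiagonal s, pairWeight (ij.1 + 1) (ij.2 + 1) =
      alternatingNat (s + 2) * (s + 1) ^ 2 := by
  have hrow : ∀ ij ∈ antidiagonal s, pairWeight (ij.1 + 1) (ij.2 + 1) =
      alternatingNat (ij.1 + 1) * ↑(ij.1 + 1) + alternatingNat (ij.2 + 1) * ↑(ij.2 + 1) +
        alternatingNat (s + 2) * ↑(s + 2) := by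
    intro ij hij
    rw [HasAntidiagonal.mem_antidiagonal] at hij
    rw [pairWeight, show ij.1 + 1 + (ij.2 + 1) = s + 2 by omega]
  have hswap : ∑ ij ∈ antidiagonal s, alternatingNat (ij.2 + 1) * ↑(ij.2 + 1) =
      ∑ ij ∈ antidiagonal s, alternatingNat (ij.1 + 1) * ↑(ij.1 + 1) :=
    Nat.sum_antidiagonal_swap (f := fun ij => alternatingNat (ij.1 + 1) * ↑(ij.1 + 1))
  rw [sum_congr rfl hrow, sum_add_distrib, sum_add_distrib, hswap, ← two_mul,
    Nat.sum_antidiagonal_eq_sum_range_succ_mk, two_mul_sum_range_alternatingNat_mul_self,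
    sum_const, Nat.card_antidiagonal, nsmul_eq_mul]
  simp only [alternatingNat, Nat.succ_eq_add_one]
  push_cast
  ring

lemma norm_pairWeight_le (a b : ℕ) :
    ‖pairWeight (a + 1) (b + 1)‖ ≤ 6 * (((a : ℝ) + 1) ^ 2 * ((b : ℝ) + 1) ^ 2) := by
  have h (n : ℕ) : ‖alternatingNat n * ↑n‖ = (n : ℝ) ^ 2 := by
    rw [norm_mul, norm_alternatingNat, Complex.norm_natCast, sq]
  have ha : (0 : ℝ) ≤ a := a.cast_nonneg
  have hb : (0 : ℝ) ≤ b := b.cast_nonneg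
  refine (norm_add₃_le).trans ?_
  rw [h, h, h]
  push_cast
  nlinarith [mul_nonneg ha hb, mul_nonneg (mul_nonneg ha hb) ha, mul_nonneg (mul_nonneg ha hb) hb,
    mul_nonneg (mul_nonneg ha hb) (mul_nonneg ha hb)]

end Weights

section Pairs

variable {E : Type*}

noncomputable def pairSum [AddCommMonoid E] [TopologicalSpace E] (X : ℕ → ℕ → E) : E :=
  ∑' p : ℕ × ℕ, X (p.1 + 1) (p.2 + 1)

def PairSummable [AddCommMonoid E] [TopologicalSpace E] (X : ℕ → ℕ → E) : Prop :=
  Summable fun p : ℕ × ℕ => X (p.1 + 1) (p.2 + 1)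

variable [NormedAddCommGroup E] [CompleteSpace E] {X : ℕ → ℕ → E}

lemma PairSummable.diag (hX : PairSummable X) : Summable fun n => X (n + 1) (n + 1) :=
  hX.comp_injective (i := fun n => (n, n)) fun _ _ h => congrArg Prod.fst h

lemma lowerPair_injective : Function.Injective fun p : ℕ × ℕ => (p.1 + p.2 + 1, p.1) := by
  intro p p' h
  simp only [Prod.mk.injEq] at h
  ext <;> omega

lemma PairSummable.lower (hX : PairSummable X) : PairSummable fun a b => X (a + b) a :=
  (hX.comp_injective lowerPair_injective).congr fun p => by
    simp only [Function.comp_apply, show p.1 + p.2 + 1 + 1 = p.1 + 1 + (p.2 + 1) by omega]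

lemma pairSum_eq_two_nsmul_add (hX : PairSummable X) (hsymm : ∀ a b, X a b = X b a) :
    pairSum X = 2 • pairSum (fun a b => X (a + b) a) + ∑' n, X (n + 1) (n + 1) := by
  let F : ℕ × ℕ → E := fun p => X (p.1 + 1) (p.2 + 1)
  let L : ℕ × ℕ → ℕ × ℕ := fun p => (p.1 + p.2 + 1, p.1)
  let e : (ℕ × ℕ ⊕ ℕ × ℕ) ⊕ ℕ → ℕ × ℕ := Sum.elim (Sum.elim L (Prod.swap ∘ L)) fun n => (n, n)
  have he : e.Bijective := by
    refine ⟨(lowerPair_injective.sumElim (Prod.swap_injective.comp lowerPair_injective) ?_).sumElim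
      (fun _ _ h => congrArg Prod.fst h) ?_, ?_⟩
    · intro p p' h
      simp only [Function.comp_apply, Prod.swap_prod_mk, Prod.mk.injEq] at h
      omega
    · rintro (p | p) n h <;> simp only [Sum.elim_inl, Sum.elim_inr, Function.comp_apply,
        Prod.swap_prod_mk, Prod.mk.injEq] at h <;> omega
    · rintro ⟨a, b⟩
      rcases lt_trichotomy a b with h | rfl | h
      · exact ⟨.inl (.inr (a, b - a - 1)), Prod.ext rfl (show a + (b - a - 1) + 1 = b by omega)⟩
      · exact ⟨.inr a, rfl⟩
      · exact ⟨.inl (.inl (b, a - b - 1)), Prod.ext (show b + (a - b - 1) + 1 = a by omega) rfl⟩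
  have hL : HasSum (F ∘ L) (pairSum fun a b => X (a + b) a) :=
    hX.lower.hasSum.congr_fun fun p => by
      simp only [F, L, Function.comp_apply, show p.1 + p.2 + 1 + 1 = p.1 + 1 + (p.2 + 1) by omega]
  have hU : HasSum (F ∘ Prod.swap ∘ L) (pairSum fun a b => X (a + b) a) :=
    hL.congr_fun fun p => hsymm _ _
  have hsum : HasSum (F ∘ e) (pairSum (fun a b => X (a + b) a) + pairSum (fun a b => X (a + b) a)
      + ∑' n, X (n + 1) (n + 1)) := by
    refine HasSum.sum (HasSum.sum ?_ ?_) ?_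
    exacts [hL, hU, hX.diag.hasSum]
  rw [two_nsmul, ← ((Equiv.ofBijective e he).hasSum_iff.1 hsum).tsum_eq]
  rfl

open Finset in
lemma pairSum_eq_tsum_antidiagonal (hX : PairSummable X) :
    pairSum X = ∑' n, ∑ ij ∈ antidiagonal n, X (ij.1 + 1) (ij.2 + 1) := by
  let e := HasAntidiagonal.sigmaAntidiagonalEquivProd (A := ℕ)
  have hs : Summable fun c => X ((e c).1 + 1) ((e c).2 + 1) := hX.comp_injective e.injective
  rw [pairSum, ← e.tsum_eq, hs.tsum_sigma]
  refine tsum_congr fun n => ?_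
  rw [tsum_fintype]
  exact sum_coe_sort (antidiagonal n) fun ij => X (ij.1 + 1) (ij.2 + 1)

end Pairs

section Summability

variable {q : ℂ}

lemma norm_lambertTerm_le_inv (hq : ‖q‖ < 1) {k : ℕ} (hk : k ≠ 0) :
    ‖lambertTerm q k‖ ≤ (1 - ‖q‖)⁻¹ := by
  refine (norm_lambertTerm_le hq hk).trans ?_
  rw [div_eq_mul_inv]
  exact mul_le_of_le_one_left (inv_nonneg.2 (by linarith)) (pow_le_one₀ (norm_nonneg q) hq.le)

lemma summable_pow_mul_geometric_succ {r : ℝ} (hr₀ : 0 ≤ r) (hr₁ : r < 1) (k : ℕ) :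
    Summable fun n : ℕ => ((n : ℝ) + 1) ^ k * r ^ (n + 1) := by
  have h := summable_pow_mul_geometric_of_norm_lt_one k (by rwa [Real.norm_of_nonneg hr₀] : ‖r‖ < 1)
  exact_mod_cast (summable_nat_add_iff (f := fun n : ℕ => (n : ℝ) ^ k * r ^ n) 1).2 h

lemma summable_norm_mul_lambertTerm (hq : ‖q‖ < 1) {w : ℕ → ℂ} (k : ℕ)
    (hw : ∀ n, ‖w n‖ ≤ ((n : ℝ) + 1) ^ k) :
    Summable fun n => ‖w n * lambertTerm q (n + 1)‖ := by
  refine .of_nonneg_of_le (fun _ => norm_nonneg _) (fun n => ?_)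
    ((summable_pow_mul_geometric_succ (norm_nonneg q) hq k).div_const (1 - ‖q‖))
  rw [norm_mul, mul_div_assoc]
  exact mul_le_mul (hw n) (norm_lambertTerm_le hq n.succ_ne_zero) (norm_nonneg _) (by positivity)

lemma summable_norm_mul_lambertTerm_sq (hq : ‖q‖ < 1) {w : ℕ → ℂ} (k : ℕ)
    (hw : ∀ n, ‖w n‖ ≤ ((n : ℝ) + 1) ^ k) :
    Summable fun n => ‖w n * lambertTerm q (n + 1) ^ 2‖ := by
  refine .of_nonneg_of_le (fun _ => norm_nonneg _) (fun n => ?_)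
    ((summable_norm_mul_lambertTerm hq k hw).mul_right (1 - ‖q‖)⁻¹)
  rw [sq, ← mul_assoc, norm_mul]
  gcongr
  exact norm_lambertTerm_le_inv hq n.succ_ne_zero

lemma pairSummable_pairWeight_mul (hq : ‖q‖ < 1) {Y : ℕ → ℕ → ℂ} {B : ℝ}
    (hY : ∀ a b, ‖Y (a + 1) (b + 1)‖ ≤ B * (‖q‖ ^ (a + 1) * ‖q‖ ^ (b + 1))) :
    PairSummable fun a b => pairWeight a b * Y a b := by
  have hs := summable_pow_mul_geometric_succ (norm_nonneg q) hq 2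
  refine .of_norm_bounded
    ((hs.mul_of_nonneg hs (fun _ => by positivity) (fun _ => by positivity)).mul_left (6 * B))
    fun p => ?_
  rw [norm_mul]
  calc _ ≤ 6 * (((p.1 : ℝ) + 1) ^ 2 * ((p.2 : ℝ) + 1) ^ 2) *
        (B * (‖q‖ ^ (p.1 + 1) * ‖q‖ ^ (p.2 + 1))) :=
        mul_le_mul (norm_pairWeight_le _ _) (hY _ _) (norm_nonneg _) (by positivity)
    _ = _ := by ring

lemma pairSummable_pairWeight_mul_lambertTerm_mul (hq : ‖q‖ < 1) :
    PairSummable fun a b => pairWeight a b * (lambertTerm q a * lambertTerm q b) := by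
  refine pairSummable_pairWeight_mul hq (B := (1 - ‖q‖)⁻¹ ^ 2) fun a b => ?_
  rw [norm_mul]
  calc _ ≤ ‖q‖ ^ (a + 1) / (1 - ‖q‖) * (‖q‖ ^ (b + 1) / (1 - ‖q‖)) :=
        mul_le_mul (norm_lambertTerm_le hq a.succ_ne_zero) (norm_lambertTerm_le hq b.succ_ne_zero)
          (norm_nonneg _) (div_nonneg (by positivity) (by linarith))
    _ = _ := by ring

lemma pairSummable_pairWeight_mul_lambertTerm_add_mul (hq : ‖q‖ < 1) :
    PairSummable fun a b => pairWeight a b * (lambertTerm q (a + b) * lambertTerm q a) := by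
  refine pairSummable_pairWeight_mul hq (B := (1 - ‖q‖)⁻¹ ^ 2) fun a b => ?_
  rw [norm_mul]
  calc _ ≤ ‖q‖ ^ (a + 1 + (b + 1)) / (1 - ‖q‖) * (1 - ‖q‖)⁻¹ :=
        mul_le_mul (norm_lambertTerm_le hq (by omega)) (norm_lambertTerm_le_inv hq a.succ_ne_zero)
          (norm_nonneg _) (div_nonneg (by positivity) (by linarith))
    _ = _ := by ring

lemma pairSummable_pairWeight_mul_lambertTerm_add (hq : ‖q‖ < 1) :
    PairSummable fun a b => pairWeight a b * lambertTerm q (a + b) := by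
  refine pairSummable_pairWeight_mul hq (B := (1 - ‖q‖)⁻¹) fun a b => ?_
  calc _ ≤ ‖q‖ ^ (a + 1 + (b + 1)) / (1 - ‖q‖) := norm_lambertTerm_le hq (by omega)
    _ = _ := by ring

end Summability

section PairSums

variable {q : ℂ}

lemma two_mul_pairSum_lambertTerm_add_mul (hq : ‖q‖ < 1) {u : ℕ → ℕ → ℂ}
    (hu : ∀ a b, u a b = u b a)
    (h₁ : PairSummable fun a b => u a b * (lambertTerm q a * lambertTerm q b))
    (h₂ : PairSummable fun a b => u a b * (lambertTerm q (a + b) * lambertTerm q a))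
    (h₃ : PairSummable fun a b => u a b * lambertTerm q (a + b)) :
    2 * pairSum (fun a b => u a b * (lambertTerm q (a + b) * lambertTerm q a)) =
      pairSum (fun a b => u a b * (lambertTerm q a * lambertTerm q b)) -
        pairSum fun a b => u a b * lambertTerm q (a + b) := by
  have hswap := (Equiv.prodComm ℕ ℕ).hasSum_iff.2 h₂.hasSum
  refine (two_mul _).trans ((h₁.hasSum.sub h₃.hasSum).unique
    ((h₂.hasSum.add hswap).congr_fun fun p => ?_)).symm
  simp only [Function.comp_apply, Equiv.prodComm_apply, Prod.fst_swap, Prod.snd_swap]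
  rw [hu (p.2 + 1), add_comm (p.2 + 1),
    lambertTerm_mul_lambertTerm hq p.1.succ_ne_zero p.2.succ_ne_zero]
  ring

lemma pairSum_pairWeight_mul_lambertTerm_add (hq : ‖q‖ < 1) :
    pairSum (fun a b => pairWeight a b * lambertTerm q (a + b)) =
      ∑' n : ℕ, alternatingNat (n + 1) * n ^ 2 * lambertTerm q (n + 1) := by
  have hsum := (summable_norm_mul_lambertTerm hq 3
    (w := fun n => alternatingNat (n + 1) * n ^ 2) fun n => by
      rw [norm_mul, norm_alternatingNat, norm_pow, Complex.norm_natCast, pow_succ' _ 2]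
      push_cast
      gcongr
      linarith).of_norm
  rw [pairSum_eq_tsum_antidiagonal (pairSummable_pairWeight_mul_lambertTerm_add hq),
    hsum.tsum_eq_zero_add]
  simp only [Nat.cast_zero, ne_eq, OfNat.ofNat_ne_zero, not_false_eq_true, zero_pow, mul_zero,
    zero_mul, zero_add]
  refine tsum_congr fun s => ?_
  have hrow : ∀ ij ∈ Finset.HasAntidiagonal.antidiagonal s, ij.1 + 1 + (ij.2 + 1) = s + 2 :=
    fun ij hij => by
      rw [Finset.HasAntidiagonal.mem_antidiagonal] at hij
      omega
  rw [Finset.sum_congr rfl fun ij hij => by rw [hrow ij hij], ← Finset.sum_mul,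
    sum_antidiagonal_pairWeight]
  push_cast
  ring

end PairSums

theorem four_mul_sq_tsum_alternatingNat_mul_lambertTerm {q : ℂ} (hq : ‖q‖ < 1) :
    4 * (∑' n : ℕ, alternatingNat (n + 1) * lambertTerm q (n + 1)) ^ 2 =
      2 * ∑' n : ℕ, alternatingNat (n + 1) * (n + 1) * lambertTerm q (n + 1) ^ 2 -
        ∑' n : ℕ, alternatingNat (n + 1) * n ^ 2 * lambertTerm q (n + 1) := by
  set G := lambertTerm q
  have hc : Summable fun n => ‖alternatingNat (n + 1) * G (n + 1)‖ :=
    summable_norm_mul_lambertTerm hq 1 (w := fun n => alternatingNat (n + 1))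
      fun n => by simp [norm_alternatingNat]
  let X a b := alternatingNat a * G a * (alternatingNat b * G b)
  have hX : PairSummable X :=
    summable_mul_of_summable_norm (f := fun n => alternatingNat (n + 1) * G (n + 1))
      (g := fun n => alternatingNat (n + 1) * G (n + 1)) hc hc
  have hA := pairSummable_pairWeight_mul_lambertTerm_mul hq
  have hB := pairSummable_pairWeight_mul_lambertTerm_add_mul hq
  have hsq : (∑' n, alternatingNat (n + 1) * G (n + 1)) ^ 2 = pairSum X := by
    rw [sq, tsum_mul_tsum_of_summable_norm hc hc]
    rfl
  have hXsplit := pairSum_eq_two_nsmul_add hX fun a b => mul_comm _ _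
  have hAsplit := pairSum_eq_two_nsmul_add hA fun a b => by rw [pairWeight_comm, mul_comm (G a)]
  have hproduct := two_mul_pairSum_lambertTerm_add_mul hq pairWeight_comm hA hB
    (pairSummable_pairWeight_mul_lambertTerm_add hq)
  have htelescope : pairSum (fun a b => pairWeight a b * (G (a + b) * G a)) -
      pairSum (fun a b => pairWeight (a + b) a * (G (a + b) * G a)) =
        4 * pairSum fun a b => X (a + b) a := by
    rw [pairSum, pairSum, ← hB.tsum_sub hA.lower, pairSum, ← tsum_mul_left]
    refine tsum_congr fun p => ?_
    rw [← sub_mul, pairWeight_sub_pairWeight_add]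
    ring
  have hdiag : 4 * ∑' n, X (n + 1) (n + 1) +
      ∑' n, pairWeight (n + 1) (n + 1) * (G (n + 1) * G (n + 1)) =
        2 * ∑' n, alternatingNat (n + 1) * (n + 1) * G (n + 1) ^ 2 := by
    rw [← tsum_mul_left, ← (hX.diag.mul_left 4).tsum_add hA.diag, ← tsum_mul_left]
    refine tsum_congr fun n => ?_
    have h := pairWeight_self_add (n + 1)
    push_cast at h
    linear_combination G (n + 1) ^ 2 * h
  rw [two_nsmul] at hXsplit hAsplit
  linear_combination 4 * hsq + 4 * hXsplit - 2 * htelescope + hproduct + hAsplit + hdiag -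
    pairSum_pairWeight_mul_lambertTerm_add hq

lemma mP_eq (z : ℂ) :
    mP z = 1 + 8 * ∑' n : ℕ, alternatingNat (n + 1) * lambertTerm z (n + 1) := by
  rw [mP]
  congr 2
  refine tsum_congr fun n => ?_
  simp only [alternatingNat, lambertTerm]
  push_cast
  ring

lemma mQ_eq (z : ℂ) :
    mQ z = 1 - 16 * ∑' n : ℕ, alternatingNat (n + 1) * (n + 1) ^ 2 * lambertTerm z (n + 1) := by
  rw [mQ]
  congr 2
  refine tsum_congr fun n => ?_
  simp only [alternatingNat, lambertTerm]
  push_cast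
  ring

lemma mul_deriv_mP {q : ℂ} (hq : ‖q‖ < 1) :
    q * deriv mP q = 8 * ∑' n : ℕ, (alternatingNat (n + 1) * (n + 1) * lambertTerm q (n + 1) +
      alternatingNat (n + 1) * (n + 1) * lambertTerm q (n + 1) ^ 2) := by
  obtain ⟨r, hqr, hr₁⟩ := exists_between hq
  have hr₀ : 0 ≤ r := (norm_nonneg q).trans hqr.le
  have hball : ∀ z ∈ Metric.ball (0 : ℂ) r, ‖z‖ < 1 := fun z hz =>
    (mem_ball_zero_iff.1 hz).trans hr₁
  have hbound : ∀ n, ∀ z ∈ Metric.ball (0 : ℂ) r, ‖alternatingNat (n + 1) * lambertTerm z (n + 1)‖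
      ≤ ((n : ℝ) + 1) ^ 1 * r ^ (n + 1) / (1 - r) := by
    intro n z hz
    have hzr := mem_ball_zero_iff.1 hz
    rw [norm_mul, norm_alternatingNat, mul_div_assoc, pow_one]
    push_cast
    gcongr
    refine (norm_lambertTerm_le (hball z hz) n.succ_ne_zero).trans ?_
    gcongr
  have hderiv := hasSum_deriv_of_summable_norm
    ((summable_pow_mul_geometric_succ hr₀ hr₁ 1).div_const (1 - r))
    (fun n z hz => ((hasDerivAt_lambertTerm (hball z hz) n).differentiableAt.const_mul
      (alternatingNat (n + 1))).differentiableWithinAt)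
    Metric.isOpen_ball hbound (mem_ball_zero_iff.2 hqr)
  rw [funext mP_eq, deriv_const_add', deriv_const_mul_field']
  beta_reduce
  rw [← hderiv.tsum_eq, mul_left_comm, ← tsum_mul_left]
  congr 1
  refine tsum_congr fun n => ?_
  rw [deriv_const_mul_field', mul_left_comm, mul_deriv_lambertTerm hq]
  ring

/-- For `|q| < 1`, one has `q·𝒫′(q) = (𝒫(q)² − 𝒬(q))/4`. -/
theorem mP_deriv (q : ℂ) (hq : ‖q‖ < 1) :
    q * deriv mP q = (mP q ^ 2 - mQ q) / 4 := by
  have hc := (summable_norm_mul_lambertTerm hq 1 (w := fun n => alternatingNat (n + 1))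
    fun n => by simp [norm_alternatingNat]).of_norm
  have hcn := (summable_norm_mul_lambertTerm hq 2 (w := fun n => alternatingNat (n + 1) * (n + 1))
    fun n => le_of_eq <| by simp [norm_alternatingNat, norm_natCast_add_one]; ring).of_norm
  have hcn' := (summable_norm_mul_lambertTerm_sq hq 2
    (w := fun n => alternatingNat (n + 1) * (n + 1))
    fun n => le_of_eq <| by simp [norm_alternatingNat, norm_natCast_add_one]; ring).of_norm
  have hcn2 := (summable_norm_mul_lambertTerm hq 3
    (w := fun n => alternatingNat (n + 1) * (n + 1) ^ 2)
    fun n => le_of_eq <| by simp [norm_alternatingNat, norm_natCast_add_one]; ring).of_norm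
  have hexpand : ∑' n : ℕ, alternatingNat (n + 1) * n ^ 2 * lambertTerm q (n + 1) =
      ∑' n : ℕ, alternatingNat (n + 1) * lambertTerm q (n + 1) +
        ∑' n : ℕ, alternatingNat (n + 1) * (n + 1) ^ 2 * lambertTerm q (n + 1) -
          2 * ∑' n : ℕ, alternatingNat (n + 1) * (n + 1) * lambertTerm q (n + 1) :=
    (((hc.hasSum.add hcn2.hasSum).sub (hcn.hasSum.mul_left 2)).congr_fun fun n => by ring).tsum_eq
  rw [mul_deriv_mP hq, hcn.tsum_add hcn', mP_eq, mQ_eq]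
  linear_combination 4 * hexpand - 4 * four_mul_sq_tsum_alternatingNat_mul_lambertTerm hq
end

section
/- For every complex number q with |q| < 1, one has 1 + 8·Ψ_{0,5}(q) = e(q)·𝒬(q). -/
open Complex

/-- Ramamani's double series `Ψ_{r,s}(q) = ∑_{m≥1} ∑_{n≥1} (-1)^{n-1} m^r n^s q^{mn}`. -/
noncomputable def Psi (r s : ℕ) (q : ℂ) : ℂ :=
  ∑' m : ℕ, ∑' n : ℕ, (-1) ^ n * ((m : ℂ) + 1) ^ r * ((n : ℂ) + 1) ^ s * q ^ ((m + 1) * (n + 1))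


section RamamaniAux
open Finset

noncomputable def W8f (A X B Y : ℕ) : ℂ :=
  (-1)^(B+X) * ((B:ℂ)^4 + 4*(A:ℂ)*(B:ℂ)^3 + 4*(A:ℂ)^2*(B:ℂ)^2)
    + (-1)^(A+B+X+Y) * ((B:ℂ)^4 - (A:ℂ)^2*(B:ℂ)^2)
noncomputable def w0f (A X B Y : ℕ) : ℂ := (-1)^(X+B) * (A:ℂ) * (B:ℂ)^3
noncomputable def W8z (z : (ℕ×ℕ)×(ℕ×ℕ)) : ℂ := W8f (z.1.1+1) (z.1.2+1) (z.2.1+1) (z.2.2+1)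
noncomputable def w0z (z : (ℕ×ℕ)×(ℕ×ℕ)) : ℂ := w0f (z.1.1+1) (z.1.2+1) (z.2.1+1) (z.2.2+1)

def S2 (N : ℕ) : Finset (ℕ × ℕ) :=
  (range N ×ˢ range N).filter fun p => (p.1+1)*(p.2+1) = N
def S4 (N : ℕ) : Finset ((ℕ×ℕ)×(ℕ×ℕ)) :=
  ((range N ×ˢ range N) ×ˢ (range N ×ˢ range N)).filter
    fun z => (z.1.1+1)*(z.1.2+1) + (z.2.1+1)*(z.2.2+1) = N

lemma mem_S2 {N : ℕ} {p : ℕ×ℕ} : p ∈ S2 N ↔ (p.1+1)*(p.2+1) = N := by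
  simp only [S2, mem_filter, mem_product, mem_range]
  constructor
  · tauto
  · intro h
    have h1 : p.1+1 ≤ (p.1+1)*(p.2+1) := Nat.le_mul_of_pos_right _ (Nat.succ_pos _)
    have h2 : p.2+1 ≤ (p.1+1)*(p.2+1) := Nat.le_mul_of_pos_left _ (Nat.succ_pos _)
    exact ⟨⟨by omega, by omega⟩, h⟩

lemma mem_S4 {N : ℕ} {z : (ℕ×ℕ)×(ℕ×ℕ)} :
    z ∈ S4 N ↔ (z.1.1+1)*(z.1.2+1) + (z.2.1+1)*(z.2.2+1) = N := by
  simp only [S4, mem_filter, mem_product, mem_range]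
  constructor
  · tauto
  · intro h
    have h1 : z.1.1+1 ≤ (z.1.1+1)*(z.1.2+1) := Nat.le_mul_of_pos_right _ (Nat.succ_pos _)
    have h2 : z.1.2+1 ≤ (z.1.1+1)*(z.1.2+1) := Nat.le_mul_of_pos_left _ (Nat.succ_pos _)
    have h3 : z.2.1+1 ≤ (z.2.1+1)*(z.2.2+1) := Nat.le_mul_of_pos_right _ (Nat.succ_pos _)
    have h4 : z.2.2+1 ≤ (z.2.1+1)*(z.2.2+1) := Nat.le_mul_of_pos_left _ (Nat.succ_pos _)
    exact ⟨⟨⟨by omega, by omega⟩, by omega, by omega⟩, h⟩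

lemma sum_S2_swap (N : ℕ) (g : ℕ → ℕ → ℂ) :
    ∑ p ∈ S2 N, g p.1 p.2 = ∑ p ∈ S2 N, g p.2 p.1 := by
  refine Finset.sum_nbij' (fun p => (p.2, p.1)) (fun p => (p.2, p.1)) ?_ ?_ ?_ ?_ ?_
  · intro p hp; rw [mem_S2] at hp ⊢; rw [Nat.mul_comm]; exact hp
  · intro p hp; rw [mem_S2] at hp ⊢; rw [Nat.mul_comm]; exact hp
  · intro p _; rfl
  · intro p _; rfl
  · intro p _; rfl

lemma sum_split (T : Finset ((ℕ×ℕ)×(ℕ×ℕ))) (u v : ((ℕ×ℕ)×(ℕ×ℕ)) → ℕ) (F : ((ℕ×ℕ)×(ℕ×ℕ)) → ℂ) :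
    ∑ z ∈ T, F z = ∑ z ∈ T.filter (fun z => u z < v z), F z
      + ∑ z ∈ T.filter (fun z => u z = v z), F z
      + ∑ z ∈ T.filter (fun z => v z < u z), F z := by
  classical
  rw [← Finset.sum_filter_add_sum_filter_not T (fun z => u z < v z)]
  rw [← Finset.sum_filter_add_sum_filter_not (T.filter (fun z => ¬ u z < v z)) (fun z => u z = v z)]
  rw [Finset.filter_filter, Finset.filter_filter]
  have e1 : T.filter (fun a => ¬ u a < v a ∧ u a = v a) = T.filter (fun z => u z = v z) :=
    Finset.filter_congr (fun x _ => by omega)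
  have e2 : T.filter (fun a => ¬ u a < v a ∧ ¬ u a = v a) = T.filter (fun z => v z < u z) :=
    Finset.filter_congr (fun x _ => by omega)
  rw [e1, e2]; ring

lemma sum_swap_ab (N : ℕ) (F : ((ℕ×ℕ)×(ℕ×ℕ)) → ℂ) :
    ∑ z ∈ (S4 N).filter (fun z => z.1.1 < z.2.1), F z
      = ∑ z ∈ (S4 N).filter (fun z => z.2.1 < z.1.1), F (z.2, z.1) := by
  refine Finset.sum_nbij' (fun z => (z.2, z.1)) (fun z => (z.2, z.1)) ?_ ?_ ?_ ?_ ?_ <;>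
    intro z hz <;> simp_all [Finset.mem_filter, mem_S4] <;> omega

lemma sum_swap_xy (N : ℕ) (F : ((ℕ×ℕ)×(ℕ×ℕ)) → ℂ) :
    ∑ z ∈ (S4 N).filter (fun z => z.1.2 < z.2.2), F z
      = ∑ z ∈ (S4 N).filter (fun z => z.2.2 < z.1.2), F (z.2, z.1) := by
  refine Finset.sum_nbij' (fun z => (z.2, z.1)) (fun z => (z.2, z.1)) ?_ ?_ ?_ ?_ ?_ <;>
    intro z hz <;> simp_all [Finset.mem_filter, mem_S4] <;> omega

def bm (z : (ℕ×ℕ)×(ℕ×ℕ)) : (ℕ×ℕ)×(ℕ×ℕ) :=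
  ((z.2.1, z.1.2+z.2.2+1), (z.1.1-z.2.1-1, z.1.2))

lemma sum_beta (N : ℕ) (F : ((ℕ×ℕ)×(ℕ×ℕ)) → ℂ) :
    ∑ z ∈ (S4 N).filter (fun z => z.2.2 < z.1.2), F z
      = ∑ z ∈ (S4 N).filter (fun z => z.2.1 < z.1.1), F (bm z) := by
  refine Finset.sum_nbij' (fun z => ((z.1.1+z.2.1+1, z.2.2), (z.1.1, z.1.2-z.2.2-1)))
    bm ?_ ?_ ?_ ?_ ?_
  · rintro ⟨⟨n, m⟩, n', m'⟩ hz
    simp only [Finset.mem_filter, mem_S4] at hz ⊢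
    obtain ⟨hN, hlt⟩ := hz
    obtain ⟨k, hk⟩ : ∃ k, m = m' + k + 1 := ⟨m - m' - 1, by omega⟩
    subst hk
    constructor
    · have h1 : m' + k + 1 - m' - 1 = k := by omega
      rw [h1]
      have h2 : (n+n'+1+1)*(m'+1) + (n+1)*(k+1) = (n+1)*(m'+k+1+1) + (n'+1)*(m'+1) := by ring
      omega
    · omega
  · rintro ⟨⟨n, m⟩, n', m'⟩ hz
    simp only [Finset.mem_filter, mem_S4, bm] at hz ⊢
    obtain ⟨hN, hlt⟩ := hz
    obtain ⟨k, hk⟩ : ∃ k, n = n' + k + 1 := ⟨n - n' - 1, by omega⟩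
    subst hk
    constructor
    · have h1 : n' + k + 1 - n' - 1 = k := by omega
      rw [h1]
      have h2 : (n'+1)*(m+m'+1+1) + (k+1)*(m+1) = (n'+k+1+1)*(m+1) + (n'+1)*(m'+1) := by ring
      omega
    · omega
  · rintro ⟨⟨n, m⟩, n', m'⟩ hz
    simp only [Finset.mem_filter, mem_S4] at hz
    simp only [bm, Prod.mk.injEq, true_and, and_true]
    omega
  · rintro ⟨⟨n, m⟩, n', m'⟩ hz
    simp only [Finset.mem_filter, mem_S4] at hz
    simp only [bm, Prod.mk.injEq, true_and, and_true]
    omega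
  · rintro ⟨⟨n, m⟩, n', m'⟩ hz
    simp only [Finset.mem_filter, mem_S4] at hz
    have hb : (bm ((fun z => ((z.1.1 + z.2.1 + 1, z.2.2), z.1.1, z.1.2 - z.2.2 - 1))
        ((n, m), n', m'))) = ((n,m),(n',m')) := by
      simp only [bm, Prod.mk.injEq, true_and, and_true]
      omega
    rw [hb]

lemma sum_beta2 (N : ℕ) (F : ((ℕ×ℕ)×(ℕ×ℕ)) → ℂ) :
    ∑ z ∈ (S4 N).filter (fun z => z.1.2 < z.2.2), F z
      = ∑ z ∈ (S4 N).filter (fun z => z.2.1 < z.1.1), F ((bm z).2, (bm z).1) := by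
  refine Finset.sum_nbij' (fun z => ((z.1.1+z.2.1+1, z.1.2), (z.2.1, z.2.2-z.1.2-1)))
    (fun z => ((z.1.1-z.2.1-1, z.1.2), (z.2.1, z.1.2+z.2.2+1))) ?_ ?_ ?_ ?_ ?_
  · rintro ⟨⟨n, m⟩, n', m'⟩ hz
    simp only [Finset.mem_filter, mem_S4] at hz ⊢
    obtain ⟨hN, hlt⟩ := hz
    obtain ⟨k, hk⟩ : ∃ k, m' = m + k + 1 := ⟨m' - m - 1, by omega⟩
    subst hk
    constructor
    · have h1 : m + k + 1 - m - 1 = k := by omega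
      rw [h1]
      have h2 : (n+n'+1+1)*(m+1) + (n'+1)*(k+1) = (n+1)*(m+1) + (n'+1)*(m+k+1+1) := by ring
      omega
    · omega
  · rintro ⟨⟨n, m⟩, n', m'⟩ hz
    simp only [Finset.mem_filter, mem_S4] at hz ⊢
    obtain ⟨hN, hlt⟩ := hz
    obtain ⟨k, hk⟩ : ∃ k, n = n' + k + 1 := ⟨n - n' - 1, by omega⟩
    subst hk
    constructor
    · have h1 : n' + k + 1 - n' - 1 = k := by omega
      rw [h1]
      have h2 : (k+1)*(m+1) + (n'+1)*(m+m'+1+1) = (n'+k+1+1)*(m+1) + (n'+1)*(m'+1) := by ring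
      omega
    · omega
  · rintro ⟨⟨n, m⟩, n', m'⟩ hz
    simp only [Finset.mem_filter, mem_S4] at hz
    simp only [Prod.mk.injEq, true_and, and_true]
    omega
  · rintro ⟨⟨n, m⟩, n', m'⟩ hz
    simp only [Finset.mem_filter, mem_S4] at hz
    simp only [Prod.mk.injEq, true_and, and_true]
    omega
  · rintro ⟨⟨n, m⟩, n', m'⟩ hz
    simp only [Finset.mem_filter, mem_S4] at hz
    have hb : ((bm ((fun z => ((z.1.1+z.2.1+1, z.1.2), (z.2.1, z.2.2-z.1.2-1)))
        ((n, m), n', m'))).2, (bm ((fun z => ((z.1.1+z.2.1+1, z.1.2), (z.2.1, z.2.2-z.1.2-1)))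
        ((n, m), n', m'))).1) = ((n,m),(n',m')) := by
      simp only [bm, Prod.mk.injEq, true_and, and_true]
      omega
    rw [hb]

lemma sum_diag_a (N : ℕ) (F : ((ℕ×ℕ)×(ℕ×ℕ)) → ℂ) :
    ∑ z ∈ (S4 N).filter (fun z => z.1.1 = z.2.1), F z
      = ∑ p ∈ S2 N, ∑ j ∈ range p.2, F ((p.1, j), (p.1, p.2-j-1)) := by
  rw [Finset.sum_sigma' (S2 N) (fun p => range p.2) (fun p j => F ((p.1, j), (p.1, p.2-j-1)))]
  refine Finset.sum_nbij' (fun z => ⟨(z.1.1, z.1.2+z.2.2+1), z.1.2⟩)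
    (fun σ => ((σ.1.1, σ.2), (σ.1.1, σ.1.2-σ.2-1))) ?_ ?_ ?_ ?_ ?_
  · rintro ⟨⟨n, m⟩, n', m'⟩ hz
    simp only [Finset.mem_filter, mem_S4] at hz
    obtain ⟨hN, heq⟩ := hz
    subst heq
    simp only [Finset.mem_sigma, mem_S2, Finset.mem_range]
    constructor
    · have h2 : (n+1)*(m+m'+1+1) = (n+1)*(m+1) + (n+1)*(m'+1) := by ring
      omega
    · omega
  · rintro ⟨⟨D, E⟩, j⟩ hσ
    simp only [Finset.mem_sigma, mem_S2, Finset.mem_range] at hσ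
    obtain ⟨hN, hj⟩ := hσ
    simp only [Finset.mem_filter, mem_S4]
    constructor
    · have h2 : (D+1)*(j+1) + (D+1)*(E-j-1+1) = (D+1)*(j+1+(E-j-1+1)) := by ring
      have h3 : j+1+(E-j-1+1) = E+1 := by omega
      rw [h2, h3]
      exact hN
    · trivial
  · rintro ⟨⟨n, m⟩, n', m'⟩ hz
    simp only [Finset.mem_filter, mem_S4] at hz
    simp only [Prod.mk.injEq, true_and, and_true]
    omega
  · rintro ⟨⟨D, E⟩, j⟩ hσ
    simp only [Finset.mem_sigma, mem_S2, Finset.mem_range] at hσ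
    have h1 : j + (E - j - 1) + 1 = E := by omega
    simp only [h1]
  · rintro ⟨⟨n, m⟩, n', m'⟩ hz
    simp only [Finset.mem_filter, mem_S4] at hz
    congr 1
    simp only [Prod.mk.injEq, true_and, and_true]
    omega

lemma sum_diag_x (N : ℕ) (F : ((ℕ×ℕ)×(ℕ×ℕ)) → ℂ) :
    ∑ z ∈ (S4 N).filter (fun z => z.1.2 = z.2.2), F z
      = ∑ p ∈ S2 N, ∑ j ∈ range p.2, F ((j, p.1), (p.2-j-1, p.1)) := by
  rw [Finset.sum_sigma' (S2 N) (fun p => range p.2) (fun p j => F ((j, p.1), (p.2-j-1, p.1)))]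
  refine Finset.sum_nbij' (fun z => ⟨(z.1.2, z.1.1+z.2.1+1), z.1.1⟩)
    (fun σ => ((σ.2, σ.1.1), (σ.1.2-σ.2-1, σ.1.1))) ?_ ?_ ?_ ?_ ?_
  · rintro ⟨⟨n, m⟩, n', m'⟩ hz
    simp only [Finset.mem_filter, mem_S4] at hz
    obtain ⟨hN, heq⟩ := hz
    subst heq
    simp only [Finset.mem_sigma, mem_S2, Finset.mem_range]
    constructor
    · have h2 : (m+1)*(n+n'+1+1) = (n+1)*(m+1) + (n'+1)*(m+1) := by ring
      omega
    · omega
  · rintro ⟨⟨D, E⟩, j⟩ hσ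
    simp only [Finset.mem_sigma, mem_S2, Finset.mem_range] at hσ
    obtain ⟨hN, hj⟩ := hσ
    simp only [Finset.mem_filter, mem_S4]
    constructor
    · have h2 : (j+1)*(D+1) + (E-j-1+1)*(D+1) = (D+1)*(j+1+(E-j-1+1)) := by ring
      have h3 : j+1+(E-j-1+1) = E+1 := by omega
      rw [h2, h3]
      exact hN
    · trivial
  · rintro ⟨⟨n, m⟩, n', m'⟩ hz
    simp only [Finset.mem_filter, mem_S4] at hz
    simp only [Prod.mk.injEq, true_and, and_true]
    omega
  · rintro ⟨⟨D, E⟩, j⟩ hσ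
    simp only [Finset.mem_sigma, mem_S2, Finset.mem_range] at hσ
    have h1 : j + (E - j - 1) + 1 = E := by omega
    simp only [h1]
  · rintro ⟨⟨n, m⟩, n', m'⟩ hz
    simp only [Finset.mem_filter, mem_S4] at hz
    congr 1
    simp only [Prod.mk.injEq, true_and, and_true]
    omega

lemma neg_one_pow_mul_self (j : ℕ) : (-1:ℂ)^j * (-1:ℂ)^j = 1 := by
  rw [← pow_add, ← two_mul, pow_mul]; norm_num
lemma neg_one_pow_sub {j E : ℕ} (h : j ≤ E) : (-1:ℂ)^(E-j) = (-1)^E * (-1)^j := by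
  have h1 : (-1:ℂ)^(E-j) * ((-1:ℂ)^j * (-1:ℂ)^j) = (-1:ℂ)^E * (-1:ℂ)^j := by
    rw [← mul_assoc, ← pow_add, Nat.sub_add_cancel h]
  simpa [neg_one_pow_mul_self] using h1
lemma W8f_diag (A X Y : ℕ) : W8f A X A Y - 8 * w0f A X A Y = (-1:ℂ)^(A+X) * (A:ℂ)^4 := by
  simp only [W8f, w0f, pow_add]; ring
lemma sum_alt (E : ℕ) (c0 c1 c2 c3 c4 : ℂ) :
    ∑ j ∈ range E, ((-1:ℂ)^j * (c4*(j:ℂ)^4 + c3*(j:ℂ)^3 + c2*(j:ℂ)^2 + c1*(j:ℂ) + c0))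
      = (c3/8 - c1/4 + c0/2)
        + (-1:ℂ)^E * (c4*(-(E:ℂ)/2 + (E:ℂ)^3 - (E:ℂ)^4/2)
          + c3*(-1/8 + 3*(E:ℂ)^2/4 - (E:ℂ)^3/2) + c2*((E:ℂ)/2 - (E:ℂ)^2/2)
          + c1*(1/4 - (E:ℂ)/2) + c0*(-1/2)) := by
  induction E with
  | zero => norm_num; ring
  | succ E ih => rw [Finset.sum_range_succ, ih, pow_succ]; push_cast; ring
lemma sum_pl (E : ℕ) (c0 c1 c2 c3 c4 : ℂ) :
    ∑ j ∈ range E, (c4*(j:ℂ)^4 + c3*(j:ℂ)^3 + c2*(j:ℂ)^2 + c1*(j:ℂ) + c0)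
      = c4*((E:ℂ)^5/5 - (E:ℂ)^4/2 + (E:ℂ)^3/3 - (E:ℂ)/30)
        + c3*((E:ℂ)^4/4 - (E:ℂ)^3/2 + (E:ℂ)^2/4)
        + c2*((E:ℂ)^3/3 - (E:ℂ)^2/2 + (E:ℂ)/6)
        + c1*((E:ℂ)^2/2 - (E:ℂ)/2) + c0*(E:ℂ) := by
  induction E with
  | zero => norm_num
  | succ E ih => rw [Finset.sum_range_succ, ih]; push_cast; ring

lemma PP (D E : ℕ) :
    8 * ((-1:ℂ)^E * ((E:ℂ)+1)^5)
      = 24 * (((E:ℂ)+1) * (-1:ℂ)^D) - 16 * ((-1:ℂ)^E * ((E:ℂ)+1)^3)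
        - 48 * ((∑ j ∈ range E, W8f (j+1) (D+1) (E-j-1+1) (D+1))
          - (∑ j ∈ range D, W8f (E+1) (j+1) (E+1) (D-j-1+1))
          + 8 * ∑ j ∈ range D, w0f (E+1) (j+1) (E+1) (D-j-1+1)) := by
  have keyX : ∀ j ∈ Finset.range E, W8f (j+1) (D+1) (E-j-1+1) (D+1)
      = (-1:ℂ)^j * (((-1:ℂ)^E*(-1:ℂ)^D*(-1))*(j:ℂ)^4
          + ((-1:ℂ)^E*(-1:ℂ)^D*(-4))*(j:ℂ)^3
          + ((-1:ℂ)^E*(-1:ℂ)^D*(-4+4*(E:ℂ)+2*(E:ℂ)^2))*(j:ℂ)^2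
          + ((-1:ℂ)^E*(-1:ℂ)^D*(8*(E:ℂ)+4*(E:ℂ)^2))*(j:ℂ)
          + ((-1:ℂ)^E*(-1:ℂ)^D*(-(4*(E:ℂ)^2+4*(E:ℂ)^3+(E:ℂ)^4))))
        + (((-1:ℂ)^E*0)*(j:ℂ)^4 + ((-1:ℂ)^E*(2+2*(E:ℂ)))*(j:ℂ)^3
          + ((-1:ℂ)^E*(1-4*(E:ℂ)-5*(E:ℂ)^2))*(j:ℂ)^2
          + ((-1:ℂ)^E*(-2*(E:ℂ)+2*(E:ℂ)^2+4*(E:ℂ)^3))*(j:ℂ)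
          + ((-1:ℂ)^E*((E:ℂ)^2-(E:ℂ)^4))) := by
    intro j hj
    rw [Finset.mem_range] at hj
    have h1 : E - j - 1 + 1 = E - j := by omega
    rw [h1]
    have h2 : (j+1) + (E-j) + (D+1) + (D+1) = E + 1 + 2*(D+1) := by omega
    simp only [W8f, h2]
    rw [Nat.cast_sub hj.le]
    simp only [pow_add, pow_mul, neg_one_pow_sub hj.le]
    norm_num
    push_cast
    ring
  have keyA : ∑ j ∈ range D, W8f (E+1) (j+1) (E+1) (D-j-1+1)
      = 8 * ∑ j ∈ range D, w0f (E+1) (j+1) (E+1) (D-j-1+1)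
        + ∑ j ∈ range D, (-1:ℂ)^j * ((0:ℂ)*(j:ℂ)^4 + 0*(j:ℂ)^3 + 0*(j:ℂ)^2 + 0*(j:ℂ)
            + ((-1:ℂ)^E*((E:ℂ)+1)^4)) := by
    rw [Finset.mul_sum, ← Finset.sum_add_distrib]
    refine Finset.sum_congr rfl fun j _ => ?_
    have h := W8f_diag (E+1) (j+1) (D-j-1+1)
    push_cast at h
    linear_combination h
  rw [Finset.sum_congr rfl keyX, Finset.sum_add_distrib, sum_alt, sum_pl, keyA, sum_alt]
  rcases Nat.even_or_odd E with hE | hE <;>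
    simp only [hE.neg_one_pow] <;> push_cast <;> ring

lemma Ulem (b c x y : ℕ) :
    W8f (b+c+2) (x+1) (b+1) (y+1) + W8f (b+1) (y+1) (b+c+2) (x+1)
      - W8f (b+1) (x+y+2) (c+1) (x+1) - W8f (c+1) (x+1) (b+1) (x+y+2)
    = 8*(w0f (b+c+2) (x+1) (b+1) (y+1) + w0f (b+1) (y+1) (b+c+2) (x+1)) := by
  simp only [W8f, w0f, pow_add]
  push_cast
  rcases Nat.even_or_odd b with hb | hb <;> rcases Nat.even_or_odd c with hc | hc <;>
    rcases Nat.even_or_odd x with hx | hx <;> rcases Nat.even_or_odd y with hy | hy <;>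
    simp only [hb.neg_one_pow, hc.neg_one_pow, hx.neg_one_pow, hy.neg_one_pow] <;>
    norm_num <;> ring


lemma heart (N : ℕ) :
    8 * ∑ p ∈ S2 N, ((-1:ℂ)^p.2 * ((p.2:ℂ)+1)^5)
      = 24 * ∑ p ∈ S2 N, (((p.1:ℂ)+1) * (-1:ℂ)^p.2)
        - 16 * ∑ p ∈ S2 N, ((-1:ℂ)^p.1 * ((p.1:ℂ)+1)^3)
        - 384 * ∑ z ∈ S4 N, w0z z := by
  classical
  have h1 := sum_split (S4 N) (fun z => z.1.1) (fun z => z.2.1) w0z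
  have h2 := sum_split (S4 N) (fun z => z.1.1) (fun z => z.2.1) W8z
  have h3 := sum_split (S4 N) (fun z => z.1.2) (fun z => z.2.2) W8z
  have h4 := sum_swap_ab N w0z
  have h5 := sum_swap_ab N W8z
  have h6 := sum_beta N W8z
  have h7 := sum_beta2 N W8z
  have hU : ∑ z ∈ (S4 N).filter (fun z => z.2.1 < z.1.1), (8 * (w0z z + w0z (z.2, z.1)))
      = ∑ z ∈ (S4 N).filter (fun z => z.2.1 < z.1.1),
          (W8z z + W8z (z.2, z.1) - W8z (bm z) - W8z ((bm z).2, (bm z).1)) := by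
    refine Finset.sum_congr rfl ?_
    rintro ⟨⟨n, m⟩, n', m'⟩ hz
    simp only [Finset.mem_filter, mem_S4] at hz
    obtain ⟨-, hlt⟩ := hz
    obtain ⟨c, rfl⟩ : ∃ c, n = n'+c+1 := ⟨n-n'-1, by omega⟩
    have hb : bm ((n'+c+1, m), (n', m')) = ((n', m+m'+1), (c, m)) := by
      simp only [bm, Prod.mk.injEq, true_and, and_true]
      omega
    rw [hb]
    simp only [W8z, w0z]
    have e1 : n'+c+1+1 = n'+c+2 := by omega
    have e2 : m+m'+1+1 = m+m'+2 := by omega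
    rw [e1, e2]
    exact (Ulem n' c m m').symm
  simp only [mul_add, Finset.sum_add_distrib, Finset.sum_sub_distrib, ← Finset.mul_sum] at hU
  have h9 := sum_diag_a N w0z
  have h10 := sum_diag_a N W8z
  have h11 := sum_diag_x N W8z
  have h12 := sum_S2_swap N (fun d e => ∑ j ∈ range e, w0z ((d, j), (d, e-j-1)))
  have h13 := sum_S2_swap N (fun d e => ∑ j ∈ range e, W8z ((d, j), (d, e-j-1)))
  have hA := sum_S2_swap N (fun d e => ((d:ℂ)+1) * (-1:ℂ)^e)
  have hB := sum_S2_swap N (fun d e => (-1:ℂ)^d * ((d:ℂ)+1)^3)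
  have hPer : ∑ p ∈ S2 N, (8*((-1:ℂ)^p.2 * ((p.2:ℂ)+1)^5))
      = ∑ p ∈ S2 N, (24*(((p.2:ℂ)+1)*(-1:ℂ)^p.1) - 16*((-1:ℂ)^p.2*((p.2:ℂ)+1)^3)
          - 48*((∑ j ∈ range p.2, W8z ((j, p.1), (p.2-j-1, p.1)))
            - (∑ j ∈ range p.1, W8z ((p.2, j), (p.2, p.1-j-1)))
            + 8*∑ j ∈ range p.1, w0z ((p.2, j), (p.2, p.1-j-1)))) :=
    Finset.sum_congr rfl (fun p _ => by
      simpa only [W8z, w0z] using PP p.1 p.2)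
  simp only [Finset.sum_sub_distrib, Finset.sum_add_distrib, ← Finset.mul_sum] at hPer
  have hW8 : (8:ℂ) * ∑ z ∈ S4 N, w0z z
      = 8 * (∑ p ∈ S2 N, ∑ j ∈ range p.1, w0z ((p.2, j), (p.2, p.1-j-1)))
        + (∑ p ∈ S2 N, ∑ j ∈ range p.2, W8z ((j, p.1), (p.2-j-1, p.1)))
        - (∑ p ∈ S2 N, ∑ j ∈ range p.1, W8z ((p.2, j), (p.2, p.1-j-1))) := by
    linear_combination 8*h1 + 8*h4 + hU + (h3 - h2) - h5 + h6 + h7 + 8*h9 - h10 + h11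
      + 8*h12 - h13
  linear_combination hPer - 24*hA + 16*hB + 48*hW8

-- geometric lemmas
lemma geo_pos {x : ℂ} (hx : ‖x‖ < 1) : ∑' m : ℕ, x^(m+1) = x / (1 - x) := by
  have h : ∀ m : ℕ, x^(m+1) = x * x^m := fun m => by rw [pow_succ]; ring
  rw [tsum_congr h, tsum_mul_left, tsum_geometric_of_norm_lt_one hx, div_eq_mul_inv]

lemma geo_alt {x : ℂ} (hx : ‖x‖ < 1) : ∑' m : ℕ, (-1)^m * x^(m+1) = x / (1 + x) := by
  have h : ∀ m : ℕ, (-1:ℂ)^m * x^(m+1) = x * (-x)^m := fun m => by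
    rw [neg_pow]; ring
  have hx' : ‖-x‖ < 1 := by rwa [norm_neg]
  rw [tsum_congr h, tsum_mul_left, tsum_geometric_of_norm_lt_one hx', sub_neg_eq_add,
    div_eq_mul_inv]

-- summability master lemmas
lemma master {q : ℂ} (hq : ‖q‖ < 1) (k : ℕ) :
    Summable (fun p : ℕ×ℕ => ((p.1:ℝ)+1)^k * ‖q‖^((p.1+1)*(p.2+1))) := by
  have hr0 : (0:ℝ) ≤ ‖q‖ := norm_nonneg q
  have hrn : ‖(‖q‖)‖ < 1 := by rwa [Real.norm_eq_abs, _root_.abs_of_nonneg hr0]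
  have hf : Summable (fun n : ℕ => ((n:ℝ)+1)^k * ‖q‖^(n+1)) := by
    have h0 := (summable_pow_mul_geometric_of_norm_lt_one k hrn).comp_injective
      (add_left_injective 1)
    refine h0.congr fun n => ?_
    simp only [Function.comp_apply]
    push_cast
    ring
  have hg : Summable (fun m : ℕ => ‖q‖^m) := summable_geometric_of_lt_one hr0 hq
  have hfg := hf.mul_of_nonneg hg (fun n => by positivity) (fun m => by positivity)
  refine Summable.of_nonneg_of_le (fun p => by positivity) (fun p => ?_) hfg
  have hexp : p.1+1+p.2 ≤ (p.1+1)*(p.2+1) := by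
    have := Nat.le_mul_of_pos_left p.2 (show 0 < p.1+1 by omega)
    nlinarith [Nat.le_mul_of_pos_left 1 (show 0 < p.1+1 by omega)]
  calc ((p.1:ℝ)+1)^k * ‖q‖^((p.1+1)*(p.2+1))
      ≤ ((p.1:ℝ)+1)^k * ‖q‖^(p.1+1+p.2) := by
        refine mul_le_mul_of_nonneg_left ?_ (by positivity)
        exact pow_le_pow_of_le_one hr0 hq.le hexp
    _ = (((p.1:ℝ)+1)^k * ‖q‖^(p.1+1)) * ‖q‖^(p.2) := by rw [pow_add]; ring

lemma master' {q : ℂ} (hq : ‖q‖ < 1) (k : ℕ) :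
    Summable (fun p : ℕ×ℕ => ((p.2:ℝ)+1)^k * ‖q‖^((p.1+1)*(p.2+1))) := by
  have h := (master hq k).comp_injective Prod.swap_injective
  refine h.congr fun p => ?_
  simp only [Function.comp_apply, Prod.fst_swap, Prod.snd_swap]
  rw [Nat.mul_comm (p.2+1) (p.1+1)]

noncomputable def fA (q : ℂ) (p : ℕ×ℕ) : ℂ := ((p.1:ℂ)+1) * (-1)^p.2 * q^((p.1+1)*(p.2+1))
noncomputable def fB (q : ℂ) (p : ℕ×ℕ) : ℂ := (-1)^p.1 * ((p.1:ℂ)+1)^3 * q^((p.1+1)*(p.2+1))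
noncomputable def fC (q : ℂ) (p : ℕ×ℕ) : ℂ := (-1)^p.2 * ((p.2:ℂ)+1)^5 * q^((p.1+1)*(p.2+1))

lemma hnA {q : ℂ} (hq : ‖q‖ < 1) : Summable (fun p : ℕ×ℕ => ‖fA q p‖) := by
  refine (master hq 1).congr fun p => ?_
  simp only [fA, norm_mul, norm_pow, norm_neg, norm_one, one_pow, mul_one, one_mul, pow_one]
  rw [show ((p.1:ℂ)+1) = ((p.1+1 : ℕ):ℂ) from by push_cast; ring, Complex.norm_natCast]
  push_cast
  ring

lemma hnB {q : ℂ} (hq : ‖q‖ < 1) : Summable (fun p : ℕ×ℕ => ‖fB q p‖) := by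
  refine (master hq 3).congr fun p => ?_
  simp only [fB, norm_mul, norm_pow, norm_neg, norm_one, one_pow, mul_one, one_mul]
  rw [show ((p.1:ℂ)+1) = ((p.1+1 : ℕ):ℂ) from by push_cast; ring, Complex.norm_natCast]
  push_cast
  ring

lemma hnC {q : ℂ} (hq : ‖q‖ < 1) : Summable (fun p : ℕ×ℕ => ‖fC q p‖) := by
  refine (master' hq 5).congr fun p => ?_
  simp only [fC, norm_mul, norm_pow, norm_neg, norm_one, one_pow, mul_one, one_mul]
  rw [show ((p.2:ℂ)+1) = ((p.2+1 : ℕ):ℂ) from by push_cast; ring, Complex.norm_natCast]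
  push_cast
  ring

lemma lambert_ee {q : ℂ} (hq : ‖q‖ < 1) :
    ∑' n : ℕ, ((n : ℂ) + 1) * q ^ (n + 1) / (1 + q ^ (n + 1)) = ∑' p : ℕ×ℕ, fA q p := by
  have hsum : Summable (fA q) := (hnA hq).of_norm
  rw [Summable.tsum_prod' hsum (fun n => hsum.prod_factor n)]
  refine tsum_congr fun n => ?_
  have hxn : ‖q^(n+1)‖ < 1 := by
    rw [norm_pow]; exact pow_lt_one₀ (norm_nonneg q) hq (Nat.succ_ne_zero n)
  have h1 : ∑' m, fA q (n, m) = ∑' m : ℕ, ((n:ℂ)+1) * ((-1)^m * (q^(n+1))^(m+1)) := by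
    refine tsum_congr fun m => ?_
    simp only [fA]
    rw [pow_mul]
    ring
  rw [h1, tsum_mul_left, geo_alt hxn, mul_div_assoc]

lemma lambert_mQ {q : ℂ} (hq : ‖q‖ < 1) :
    ∑' n : ℕ, (-1) ^ n * ((n : ℂ) + 1) ^ 3 * q ^ (n + 1) / (1 - q ^ (n + 1))
      = ∑' p : ℕ×ℕ, fB q p := by
  have hsum : Summable (fB q) := (hnB hq).of_norm
  rw [Summable.tsum_prod' hsum (fun n => hsum.prod_factor n)]
  refine tsum_congr fun n => ?_
  have hxn : ‖q^(n+1)‖ < 1 := by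
    rw [norm_pow]; exact pow_lt_one₀ (norm_nonneg q) hq (Nat.succ_ne_zero n)
  have h1 : ∑' m, fB q (n, m) = ∑' m : ℕ, ((-1:ℂ)^n * ((n:ℂ)+1)^3) * (q^(n+1))^(m+1) := by
    refine tsum_congr fun m => ?_
    simp only [fB]
    rw [pow_mul]
  rw [h1, tsum_mul_left, geo_pos hxn, mul_div_assoc]

lemma lambert_psi {q : ℂ} (hq : ‖q‖ < 1) : Psi 0 5 q = ∑' p : ℕ×ℕ, fC q p := by
  have hsum : Summable (fC q) := (hnC hq).of_norm
  rw [Psi, Summable.tsum_prod' hsum (fun m => hsum.prod_factor m)]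
  refine tsum_congr fun m => tsum_congr fun n => ?_
  simp only [fC, pow_zero, mul_one]


lemma regroup {ι : Type*} (f : ι → ℂ) (hf : Summable f) (w : ι → ℕ) (S : ℕ → Finset ι)
    (hS : ∀ N i, i ∈ S N ↔ w i = N) :
    HasSum (fun N => ∑ i ∈ S N, f i) (∑' i, f i) := by
  have he : HasSum (fun pp : (Σ N : ℕ, {i // w i = N}) => f pp.2) (∑' i, f i) :=
    ((Equiv.sigmaFiberEquiv w).hasSum_iff).mpr hf.hasSum
  refine HasSum.sigma he (fun N => ?_)
  exact ((Equiv.subtypeEquivRight (fun i => (hS N i))).hasSum_iff).mp ((S N).hasSum f)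

lemma factorA (q : ℂ) (N : ℕ) :
    ∑ p ∈ S2 N, fA q p = (∑ p ∈ S2 N, (((p.1:ℂ)+1) * (-1:ℂ)^p.2)) * q^N := by
  rw [Finset.sum_mul]
  refine Finset.sum_congr rfl fun p hp => ?_
  rw [mem_S2] at hp
  simp only [fA]
  rw [hp]

lemma factorB (q : ℂ) (N : ℕ) :
    ∑ p ∈ S2 N, fB q p = (∑ p ∈ S2 N, ((-1:ℂ)^p.1 * ((p.1:ℂ)+1)^3)) * q^N := by
  rw [Finset.sum_mul]
  refine Finset.sum_congr rfl fun p hp => ?_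
  rw [mem_S2] at hp
  simp only [fB]
  rw [hp]

lemma factorC (q : ℂ) (N : ℕ) :
    ∑ p ∈ S2 N, fC q p = (∑ p ∈ S2 N, ((-1:ℂ)^p.2 * ((p.2:ℂ)+1)^5)) * q^N := by
  rw [Finset.sum_mul]
  refine Finset.sum_congr rfl fun p hp => ?_
  rw [mem_S2] at hp
  simp only [fC]
  rw [hp]

lemma factorE (q : ℂ) (N : ℕ) :
    ∑ z ∈ S4 N, (fA q z.1 * fB q z.2) = (∑ z ∈ S4 N, w0z z) * q^N := by
  rw [Finset.sum_mul]
  refine Finset.sum_congr rfl fun z hz => ?_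
  rw [mem_S4] at hz
  simp only [fA, fB, w0z, w0f]
  rw [← hz]
  simp only [pow_add, pow_succ]
  push_cast
  ring

end RamamaniAux

/-- For `|q| < 1`, `1 + 8·Ψ_{0,5}(q) = e(q)·𝒬(q)`. -/
theorem Psi_zero_five (q : ℂ) (hq : ‖q‖ < 1) :
    1 + 8 * Psi 0 5 q = ee q * mQ q := by
  have hnA' := hnA hq
  have hnB' := hnB hq
  have hnC' := hnC hq
  have hsA : Summable (fA q) := hnA'.of_norm
  have hsB : Summable (fB q) := hnB'.of_norm
  have hsC : Summable (fC q) := hnC'.of_norm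
  have hsE : Summable (fun z : (ℕ×ℕ)×(ℕ×ℕ) => fA q z.1 * fB q z.2) :=
    summable_mul_of_summable_norm hnA' hnB'
  have hAB : (∑' p, fA q p) * (∑' p, fB q p) = ∑' z : (ℕ×ℕ)×(ℕ×ℕ), fA q z.1 * fB q z.2 :=
    tsum_mul_tsum_of_summable_norm hnA' hnB'
  have HA := regroup (fA q) hsA (fun p => (p.1+1)*(p.2+1)) S2 (fun N i => mem_S2)
  have HB := regroup (fB q) hsB (fun p => (p.1+1)*(p.2+1)) S2 (fun N i => mem_S2)
  have HC := regroup (fC q) hsC (fun p => (p.1+1)*(p.2+1)) S2 (fun N i => mem_S2)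
  have HE := regroup _ hsE (fun z => (z.1.1+1)*(z.1.2+1) + (z.2.1+1)*(z.2.2+1)) S4
    (fun N z => mem_S4)
  simp only [factorA q] at HA
  simp only [factorB q] at HB
  simp only [factorC q] at HC
  simp only [factorE q] at HE
  have combined := ((HA.mul_left 24).sub (HB.mul_left 16)).sub (HE.mul_left 384)
  have hfun : (fun N => 24 * ((∑ p ∈ S2 N, (((p.1:ℂ)+1) * (-1:ℂ)^p.2)) * q^N)
        - 16 * ((∑ p ∈ S2 N, ((-1:ℂ)^p.1 * ((p.1:ℂ)+1)^3)) * q^N)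
        - 384 * ((∑ z ∈ S4 N, w0z z) * q^N))
      = (fun N => 8 * ((∑ p ∈ S2 N, ((-1:ℂ)^p.2 * ((p.2:ℂ)+1)^5)) * q^N)) := by
    funext N
    linear_combination (-(q^N)) * heart N
  rw [hfun] at combined
  have h8 : 8 * (∑' p, fC q p)
      = 24 * (∑' p, fA q p) - 16 * (∑' p, fB q p)
        - 384 * ∑' z : (ℕ×ℕ)×(ℕ×ℕ), fA q z.1 * fB q z.2 :=
    (HC.mul_left 8).unique combined
  simp only [ee, mQ, lambert_ee hq, lambert_mQ hq, lambert_psi hq]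
  linear_combination h8 + 384 * hAB
end
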